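/- arXiv:2604.14860 — 2 statements merged into one kernel-verified Lean document; each statement's English description precedes it below -/
import Mathlib

section
/- Under the setting of the uniform random learner Rule: g : [K]×[n] → [0,1] fixed, I_t i.i.d. uniform on [K], G̃_k = ∑_t K·g(k,t)·1{I_t=k}, G_k = ∑_t g(k,t), with a unique best arm k* = argmax_k G_k and gaps Δ_k = |max_{i≠k} G_i − G_k|/n. If J = argmax_k G̃_k, then P(J ≠ k*) ≤ K · exp(−3n·Δ_{(1)}²/(28K)), where Δ_{(1)} is the smallest gap. -/
/-!
For a suboptimal arm `j`, the event that the estimate of `j` beats that of `k*` is the event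
`0 ≤ ∑ₜ Xₜ` for the independent rounds `Xₜ = K g(j,t) 1{Iₜ = j} - K g(k*,t) 1{Iₜ = k*}`, which have
mean `g(j,t) - g(k*,t)`, satisfy `|Xₜ| ≤ K` and have second moment at most `2K`. Since
`eˣ ≤ 1 + x + x²` for `|x| ≤ 1`, the moment generating function of `Xₜ` at `θ ≤ 1/K` is at most
`exp (θ (g(j,t) - g(k*,t)) + 2θ²K)`, and Chernoff's bound at `θ = Δ/(4K)` bounds the event by
`exp (-nΔ²/(8K)) ≤ exp (-3nΔ²/(28K))`. A union bound over the at most `K` suboptimal arms ends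
the proof.
-/

open MeasureTheory ProbabilityTheory Real

section Chernoff

variable {Ω ι : Type*} [MeasurableSpace Ω] {μ : Measure Ω}

lemma mgf_le_exp_of_abs_le [IsProbabilityMeasure μ] {X : Ω → ℝ} {c t : ℝ}
    (hX : Measurable X) (hXc : ∀ ω, |X ω| ≤ c) (htc : |t| * c ≤ 1) :
    mgf X μ t ≤ exp (t * μ[X] + t ^ 2 * ∫ ω, X ω ^ 2 ∂μ) := by
  have hX_int : Integrable X μ := .of_bound hX.aestronglyMeasurable c (ae_of_all _ hXc)
  have hX2_int : Integrable (fun ω => X ω ^ 2) μ :=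
    .of_bound (hX.pow_const 2).aestronglyMeasurable (c ^ 2) (ae_of_all _ fun ω => by
      simpa [sq_abs] using pow_le_pow_left₀ (abs_nonneg _) (hXc ω) 2)
  have hexp_int : Integrable (fun ω => exp (t * X ω)) μ :=
    integrable_exp_mul_of_mem_Icc hX.aemeasurable (ae_of_all _ fun ω => abs_le.mp (hXc ω))
  have hlin_int : Integrable (fun ω => 1 + t * X ω) μ :=
    (integrable_const 1).add (hX_int.const_mul t)
  have hpt : ∀ ω, exp (t * X ω) ≤ 1 + t * X ω + t ^ 2 * X ω ^ 2 := fun ω => by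
    have h : |t * X ω| ≤ 1 := by
      rw [abs_mul]
      exact (mul_le_mul_of_nonneg_left (hXc ω) (abs_nonneg t)).trans htc
    have := (abs_le.mp (abs_exp_sub_one_sub_id_le h)).2
    linarith [mul_pow t (X ω) 2]
  calc mgf X μ t ≤ ∫ ω, (1 + t * X ω + t ^ 2 * X ω ^ 2) ∂μ :=
        integral_mono hexp_int (hlin_int.add (hX2_int.const_mul _)) hpt
    _ = 1 + (t * μ[X] + t ^ 2 * ∫ ω, X ω ^ 2 ∂μ) := by
        rw [integral_add hlin_int (hX2_int.const_mul _),
          integral_add (integrable_const 1) (hX_int.const_mul t), integral_const_mul,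
          integral_const_mul]
        simp [add_assoc]
    _ ≤ _ := by linarith [add_one_le_exp (t * μ[X] + t ^ 2 * ∫ ω, X ω ^ 2 ∂μ)]

lemma measure_sum_ge_le_of_mgf_le [IsFiniteMeasure μ] {X : ι → Ω → ℝ} (hindep : iIndepFun X μ)
    (hmeas : ∀ i, Measurable (X i)) {s : Finset ι} {t : ℝ} (ht : 0 ≤ t)
    (hint : ∀ i ∈ s, Integrable (fun ω => exp (t * X i ω)) μ) {c : ι → ℝ}
    (hc : ∀ i ∈ s, mgf (X i) μ t ≤ exp (c i)) (ε : ℝ) :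
    μ.real {ω | ε ≤ ∑ i ∈ s, X i ω} ≤ exp (-t * ε + ∑ i ∈ s, c i) := by
  have h := measure_ge_le_exp_mul_mgf ε ht (hindep.integrable_exp_mul_sum hmeas hint)
  rw [hindep.mgf_sum hmeas] at h
  calc μ.real {ω | ε ≤ ∑ i ∈ s, X i ω}
      ≤ exp (-t * ε) * ∏ i ∈ s, mgf (X i) μ t := by simpa only [Finset.sum_apply] using h
    _ ≤ exp (-t * ε) * ∏ i ∈ s, exp (c i) := by
        gcongr with i hi
        exacts [fun i _ => mgf_nonneg, hc i hi]
    _ = exp (-t * ε + ∑ i ∈ s, c i) := by rw [exp_add, exp_sum]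

lemma measure_biUnion_finset_le_card_mul {α : Type*} [MeasurableSpace α] {μ : Measure α}
    (s : Finset ι) (A : ι → Set α) {ε : ENNReal} (h : ∀ i ∈ s, μ (A i) ≤ ε) :
    μ (⋃ i ∈ s, A i) ≤ s.card * ε :=
  (measure_biUnion_finset_le s A).trans <| by
    simpa only [nsmul_eq_mul] using Finset.sum_le_card_nsmul s _ ε h

end Chernoff

/-- The importance-weighted estimate of the gain `a` of arm `j` when arm `i` is the one drawn,
uniformly among `K` arms. -/
def iwEstimate (K : ℕ) (a : ℝ) (i j : ℕ) : ℝ := K * a * if i = j then 1 else 0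

/-- The paper's `G̃ₖ`: the importance-weighted estimate of the total gain of arm `k` over the
rounds `s`. -/
def iwGain {Ω ι : Type*} (K : ℕ) (g : ℕ → ι → ℝ) (I : ι → Ω → ℕ) (s : Finset ι) (k : ℕ)
    (ω : Ω) : ℝ :=
  ∑ t ∈ s, iwEstimate K (g k t) (I t ω) k

section Round

variable {K : ℕ} {a b : ℝ} {j k : ℕ}

lemma iwEstimate_sub_sq (hjk : j ≠ k) (m : ℕ) :
    (iwEstimate K a m j - iwEstimate K b m k) ^ 2
      = K * (iwEstimate K (a ^ 2) m j + iwEstimate K (b ^ 2) m k) := by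
  unfold iwEstimate
  split_ifs with h₁ h₂ <;> first | exact absurd (h₁.symm.trans h₂) hjk | ring

lemma abs_iwEstimate_sub_le (ha : a ∈ Set.Icc 0 1) (hb : b ∈ Set.Icc 0 1) (hjk : j ≠ k)
    (m : ℕ) : |iwEstimate K a m j - iwEstimate K b m k| ≤ K := by
  obtain ⟨ha₀, ha₁⟩ := ha
  obtain ⟨hb₀, hb₁⟩ := hb
  have hK : (0 : ℝ) ≤ K := K.cast_nonneg
  unfold iwEstimate
  rw [abs_le]
  split_ifs with h₁ h₂
  · exact absurd (h₁.symm.trans h₂) hjk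
  all_goals constructor <;> nlinarith

variable {Ω : Type*} {i : Ω → ℕ}

lemma iwEstimate_eq_indicator (ω : Ω) :
    iwEstimate K a (i ω) j = {ω | i ω = j}.indicator (fun _ => (K : ℝ) * a) ω := by
  simp [iwEstimate, Set.indicator_apply]

variable [MeasurableSpace Ω] {μ : Measure Ω}

lemma integrable_iwEstimate [IsFiniteMeasure μ] (hi : Measurable i) :
    Integrable (fun ω => iwEstimate K a (i ω) j) μ := by
  simp_rw [iwEstimate_eq_indicator]
  exact (integrable_const _).indicator (hi (measurableSet_singleton j))

lemma integral_iwEstimate (hi : Measurable i) (hK : 0 < K)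
    (hj : μ {ω | i ω = j} = (K : ENNReal)⁻¹) :
    ∫ ω, iwEstimate K a (i ω) j ∂μ = a := by
  have hset : MeasurableSet {ω | i ω = j} := hi (measurableSet_singleton j)
  simp_rw [iwEstimate_eq_indicator]
  rw [integral_indicator_const _ hset, measureReal_def, hj, ENNReal.toReal_inv,
    ENNReal.toReal_natCast, smul_eq_mul]
  field_simp

lemma mgf_iwEstimate_sub_le [IsProbabilityMeasure μ] (hi : Measurable i) (hK : 0 < K)
    (hjk : j ≠ k) (hj : μ {ω | i ω = j} = (K : ENNReal)⁻¹)
    (hk : μ {ω | i ω = k} = (K : ENNReal)⁻¹) (ha : a ∈ Set.Icc 0 1) (hb : b ∈ Set.Icc 0 1)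
    {t : ℝ} (ht : 0 ≤ t) (htK : t * K ≤ 1) :
    mgf (fun ω => iwEstimate K a (i ω) j - iwEstimate K b (i ω) k) μ t
      ≤ exp (t * (a - b) + 2 * t ^ 2 * K) := by
  have hmeas : Measurable fun ω => iwEstimate K a (i ω) j - iwEstimate K b (i ω) k :=
    (measurable_of_countable fun m => iwEstimate K a m j - iwEstimate K b m k).comp hi
  refine (mgf_le_exp_of_abs_le hmeas (fun ω => abs_iwEstimate_sub_le ha hb hjk (i ω))
    (by rwa [abs_of_nonneg ht])).trans (exp_le_exp.mpr ?_)
  have hmean : ∫ ω, (iwEstimate K a (i ω) j - iwEstimate K b (i ω) k) ∂μ = a - b := by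
    rw [integral_sub (integrable_iwEstimate hi) (integrable_iwEstimate hi),
      integral_iwEstimate hi hK hj, integral_iwEstimate hi hK hk]
  have hsq : ∫ ω, (iwEstimate K a (i ω) j - iwEstimate K b (i ω) k) ^ 2 ∂μ ≤ 2 * K := by
    simp_rw [iwEstimate_sub_sq hjk]
    rw [integral_const_mul, integral_add (integrable_iwEstimate hi) (integrable_iwEstimate hi),
      integral_iwEstimate hi hK hj, integral_iwEstimate hi hK hk]
    have : a ^ 2 + b ^ 2 ≤ 2 := by nlinarith [ha.1, ha.2, hb.1, hb.2]
    nlinarith [K.cast_nonneg (α := ℝ)]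
  rw [hmean]
  nlinarith [sq_nonneg t]

end Round

lemma measureReal_iwGain_le_le {Ω ι : Type*} [MeasurableSpace Ω] {μ : Measure Ω}
    [IsProbabilityMeasure μ] {K : ℕ} {g : ℕ → ι → ℝ} {I : ι → Ω → ℕ} {s : Finset ι} {j k : ℕ}
    (hmeas : ∀ t, Measurable (I t)) (hindep : iIndepFun I μ) (hK : 0 < K) (hjk : j ≠ k)
    (hj : ∀ t ∈ s, μ {ω | I t ω = j} = (K : ENNReal)⁻¹)
    (hk : ∀ t ∈ s, μ {ω | I t ω = k} = (K : ENNReal)⁻¹)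
    (hgj : ∀ t ∈ s, g j t ∈ Set.Icc 0 1) (hgk : ∀ t ∈ s, g k t ∈ Set.Icc 0 1)
    {Δ : ℝ} (hΔ₀ : 0 ≤ Δ) (hΔ₄ : Δ ≤ 4) (hgap : s.card * Δ ≤ ∑ t ∈ s, g k t - ∑ t ∈ s, g j t) :
    μ.real {ω | iwGain K g I s k ω ≤ iwGain K g I s j ω} ≤ exp (-(s.card * Δ ^ 2) / (8 * K)) := by
  have hKpos : (0 : ℝ) < K := Nat.cast_pos.mpr hK
  let f : ι → ℕ → ℝ := fun t m => iwEstimate K (g j t) m j - iwEstimate K (g k t) m k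
  let X : ι → Ω → ℝ := fun t => f t ∘ I t
  have hXmeas : ∀ t, Measurable (X t) := fun t => (measurable_of_countable (f t)).comp (hmeas t)
  have hXindep : iIndepFun X μ := hindep.comp f fun t => measurable_of_countable (f t)
  have hevent : {ω | iwGain K g I s k ω ≤ iwGain K g I s j ω} = {ω | 0 ≤ ∑ t ∈ s, X t ω} := by
    ext ω
    simp [iwGain, X, f, Finset.sum_sub_distrib]
  -- `θ = Δ / (4K)` minimises `-θΔ + 2θ²K` and keeps `θK ≤ 1`.
  set θ := Δ / (4 * K) with hθ
  have hθ₀ : 0 ≤ θ := by positivity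
  have hθK : θ * K ≤ 1 := by rw [hθ]; field_simp; linarith
  rw [hevent]
  refine (measure_sum_ge_le_of_mgf_le hXindep hXmeas hθ₀
    (fun t ht => integrable_exp_mul_of_le θ K hθ₀ (hXmeas t).aemeasurable (ae_of_all _ fun ω =>
      (le_abs_self _).trans (abs_iwEstimate_sub_le (hgj t ht) (hgk t ht) hjk (I t ω))))
    (fun t ht => mgf_iwEstimate_sub_le (hmeas t) hK hjk (hj t ht) (hk t ht) (hgj t ht)
      (hgk t ht) hθ₀ hθK) 0).trans (exp_le_exp.mpr ?_)
  rw [Finset.sum_add_distrib, ← Finset.mul_sum, Finset.sum_sub_distrib, Finset.sum_const,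
    nsmul_eq_mul]
  calc -θ * 0 + (θ * (∑ t ∈ s, g j t - ∑ t ∈ s, g k t) + s.card * (2 * θ ^ 2 * K))
      ≤ -θ * 0 + (θ * -(s.card * Δ) + s.card * (2 * θ ^ 2 * K)) := by gcongr; linarith
    _ = -(s.card * Δ ^ 2) / (8 * K) := by rw [hθ]; field_simp; ring

theorem rule_error_bound_general {Ω : Type*} [MeasurableSpace Ω]
    (μ : Measure Ω) [IsProbabilityMeasure μ] (n K : ℕ) (hK : 0 < K)
    (g : ℕ → ℕ → ℝ)
    (hg : ∀ k ∈ Finset.Icc 1 K, ∀ t ∈ Finset.Icc 1 n, g k t ∈ Set.Icc (0 : ℝ) 1)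
    (I : ℕ → Ω → ℕ) (hmeas : ∀ t, Measurable (I t))
    (hindep : iIndepFun I μ)
    (hunif : ∀ t ∈ Finset.Icc 1 n, ∀ k ∈ Finset.Icc 1 K,
      μ {ω | I t ω = k} = (K : ENNReal)⁻¹)
    (G : ℕ → ℝ) (hG : ∀ k, G k = ∑ t ∈ Finset.Icc 1 n, g k t)
    (kstar : ℕ) (hkstar : kstar ∈ Finset.Icc 1 K)
    (hbest : ∀ j ∈ Finset.Icc 1 K, j ≠ kstar → G j < G kstar)
    (Δmin : ℝ)
    (hgap : ∀ j ∈ Finset.Icc 1 K, j ≠ kstar → G kstar - G j ≥ (n : ℝ) * Δmin)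
    (hgapex : ∃ j ∈ Finset.Icc 1 K, j ≠ kstar ∧ G kstar - G j = (n : ℝ) * Δmin)
    (J : Ω → ℕ)
    (hJ : ∀ ω, J ω ∈ Finset.Icc 1 K ∧ ∀ j ∈ Finset.Icc 1 K,
      (∑ t ∈ Finset.Icc 1 n, (K : ℝ) * g j t * (if I t ω = j then 1 else 0))
        ≤ (∑ t ∈ Finset.Icc 1 n, (K : ℝ) * g (J ω) t * (if I t ω = J ω then 1 else 0))) :
    μ {ω | J ω ≠ kstar}
      ≤ ENNReal.ofReal
          ((K : ℝ) * Real.exp (-3 * n * Δmin ^ 2 / (28 * K))) := by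
  set s := Finset.Icc 1 n
  have hs : (s.card : ℝ) = n := by simp [s]
  obtain ⟨j₀, hj₀, hj₀k, hj₀gap⟩ := hgapex
  have hG₀ : 0 ≤ G j₀ := (hG j₀).symm ▸ Finset.sum_nonneg fun t ht => (hg j₀ hj₀ t ht).1
  have hGn : G kstar ≤ n := by
    rw [hG, ← hs]
    simpa using Finset.sum_le_card_nsmul s (g kstar) 1 fun t ht => (hg kstar hkstar t ht).2
  have hΔ₀ : 0 ≤ Δmin := by nlinarith [hbest j₀ hj₀ hj₀k]
  have hΔ₁ : Δmin ≤ 1 := by nlinarith [hbest j₀ hj₀ hj₀k]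
  set ε := ENNReal.ofReal (exp (-3 * n * Δmin ^ 2 / (28 * K))) with hε
  have harm : ∀ j ∈ (Finset.Icc 1 K).erase kstar,
      μ {ω | iwGain K g I s kstar ω ≤ iwGain K g I s j ω} ≤ ε := by
    intro j hj
    obtain ⟨hjk, hjK⟩ := Finset.mem_erase.mp hj
    rw [hε, ← ofReal_measureReal]
    refine ENNReal.ofReal_le_ofReal ((measureReal_iwGain_le_le hmeas hindep hK hjk
      (fun t ht => hunif t ht j hjK) (fun t ht => hunif t ht kstar hkstar) (hg j hjK)
      (hg kstar hkstar) hΔ₀ (by linarith) ?_).trans (exp_le_exp.mpr ?_))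
    · rw [hs, ← hG, ← hG]; exact hgap j hjK hjk
    · rw [hs, div_le_div_iff₀ (by positivity) (by positivity)]
      nlinarith [mul_nonneg (mul_nonneg n.cast_nonneg (sq_nonneg Δmin)) K.cast_nonneg]
  calc μ {ω | J ω ≠ kstar}
      ≤ μ (⋃ j ∈ (Finset.Icc 1 K).erase kstar,
          {ω | iwGain K g I s kstar ω ≤ iwGain K g I s j ω}) := measure_mono fun ω hω =>
        Set.mem_biUnion (Finset.mem_erase.mpr ⟨hω, (hJ ω).1⟩) ((hJ ω).2 kstar hkstar)
    _ ≤ ((Finset.Icc 1 K).erase kstar).card * ε := measure_biUnion_finset_le_card_mul _ _ harm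
    _ ≤ K * ε := by gcongr; exact Finset.card_erase_le.trans (by simp)
    _ = _ := by rw [hε, ENNReal.ofReal_mul K.cast_nonneg, ENNReal.ofReal_natCast]

theorem rule_error_bound {Ω : Type*} [MeasurableSpace Ω]
    (μ : Measure Ω) [IsProbabilityMeasure μ] (n K : ℕ) (hn : 0 < n) (hK : 0 < K)
    (g : ℕ → ℕ → ℝ)
    (hg : ∀ k ∈ Finset.Icc 1 K, ∀ t ∈ Finset.Icc 1 n, g k t ∈ Set.Icc (0 : ℝ) 1)
    (I : ℕ → Ω → ℕ) (hmeas : ∀ t, Measurable (I t))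
    (hindep : iIndepFun I μ)
    (hunif : ∀ t ∈ Finset.Icc 1 n, ∀ k ∈ Finset.Icc 1 K,
      μ {ω | I t ω = k} = (K : ENNReal)⁻¹)
    (G : ℕ → ℝ) (hG : ∀ k, G k = ∑ t ∈ Finset.Icc 1 n, g k t)
    (kstar : ℕ) (hkstar : kstar ∈ Finset.Icc 1 K)
    (hbest : ∀ j ∈ Finset.Icc 1 K, j ≠ kstar → G j < G kstar)
    (Δmin : ℝ)
    (hgap : ∀ j ∈ Finset.Icc 1 K, j ≠ kstar → G kstar - G j ≥ (n : ℝ) * Δmin)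
    (hgapex : ∃ j ∈ Finset.Icc 1 K, j ≠ kstar ∧ G kstar - G j = (n : ℝ) * Δmin)
    (J : Ω → ℕ)
    (hJ : ∀ ω, J ω ∈ Finset.Icc 1 K ∧ ∀ j ∈ Finset.Icc 1 K,
      (∑ t ∈ Finset.Icc 1 n, (K : ℝ) * g j t * (if I t ω = j then 1 else 0))
        ≤ (∑ t ∈ Finset.Icc 1 n, (K : ℝ) * g (J ω) t * (if I t ω = J ω then 1 else 0))) :
    μ {ω | J ω ≠ kstar}
      ≤ ENNReal.ofReal
          ((K : ℝ) * Real.exp (-3 * n * Δmin ^ 2 / (28 * K))) :=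
  rule_error_bound_general μ n K hK g hg I hmeas hindep hunif G hG kstar hkstar hbest Δmin hgap
    hgapex J hJ
end

section
/- Let K be a positive integer and Δ : [K] → ℝ with 0 < Δ(1) = Δ(2) ≤ … ≤ Δ(K) ≤ 1/8. Set a_k = Δ(1)/Δ(k) for k ∈ [K] and a_{K+1} = 0, and let j ∈ argmin_{k∈[K]} Δ(k)/k. Then for every m ∈ [K], ∑_{i=m}^{K-1} (1/Δ(i) − 1/Δ(i+1))·i + K/Δ(K) ≤ (j/Δ(j))·(log K + 1), and hence (∑_{i=m}^{K} (a_i − a_{i+1})·i)/(a_m² Δ(m)²) ≤ H_BOB·(log K + 1), where H_BOB = (1/Δ(1))·max_k k/Δ(k). -/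
/-! Summation by parts rewrites the left-hand side as `m / Δ m + ∑_{m < i ≤ K} 1 / Δ i`. Since `j`
maximises `k / Δ k`, every term `1 / Δ i` is at most `(j / Δ j) / i`, so the sum is at most
`j / Δ j` times a harmonic sum, which is at most `log K + 1`. The second bound follows because
`a = Δ 1 / Δ` on `[1, K]`, so the numerator is `Δ 1` times the first sum and the denominator
is `Δ 1 ^ 2`. -/

open Finset

theorem sum_Ico_sub_succ_mul_add {R : Type*} [CommRing R] (f : ℕ → R) {m n : ℕ} (hmn : m ≤ n) :
    ∑ i ∈ Ico m n, (f i - f (i + 1)) * i + n * f n = m * f m + ∑ i ∈ Ioc m n, f i := by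
  induction n, hmn using Nat.le_induction with
  | base => simp
  | succ n hmn ih =>
    rw [sum_Ico_succ_top hmn, sum_Ioc_succ_top hmn, ← add_assoc, ← ih]
    push_cast
    ring

theorem sum_Icc_sub_succ_mul_eq_of_eqOn {R : Type*} [CommRing R] {a f : ℕ → R} (r : R)
    {m n : ℕ} (hmn : m ≤ n) (ha : ∀ i ∈ Icc m n, a i = r * f i) (hn : a (n + 1) = 0) :
    ∑ i ∈ Icc m n, (a i - a (i + 1)) * i
      = r * (∑ i ∈ Ico m n, (f i - f (i + 1)) * i + n * f n) := by
  rw [← Ico_add_one_right_eq_Icc, sum_Ico_succ_top hmn, hn, ha n (right_mem_Icc.mpr hmn),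
    mul_add, mul_sum]
  congr 1
  · refine sum_congr rfl fun i hi => ?_
    obtain ⟨hmi, hin⟩ := mem_Ico.mp hi
    rw [ha i (mem_Icc.mpr ⟨hmi, hin.le⟩), ha (i + 1) (mem_Icc.mpr ⟨by omega, hin⟩)]
    ring
  · ring

theorem sum_Ioc_inv_le_log {m : ℕ} (hm : 1 ≤ m) (n : ℕ) :
    ∑ i ∈ Ioc m n, (i : ℝ)⁻¹ ≤ Real.log n := by
  rcases Nat.eq_zero_or_pos n with rfl | hn
  · simp
  calc ∑ i ∈ Ioc m n, (i : ℝ)⁻¹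
      ≤ ∑ i ∈ Ioc 1 n, (i : ℝ)⁻¹ :=
        sum_le_sum_of_subset_of_nonneg (Ioc_subset_Ioc_left hm) fun _ _ _ => by positivity
    _ = harmonic n - 1 := by
        rw [harmonic_eq_sum_Icc, ← add_sum_Ioc_eq_sum_Icc hn]
        push_cast
        ring
    _ ≤ Real.log n := by linarith [harmonic_le_one_add_log n]

theorem sum_Ico_sub_succ_mul_add_le {f : ℕ → ℝ} {c : ℝ} {m n : ℕ} (hm : 1 ≤ m) (hmn : m ≤ n)
    (hc : 0 ≤ c) (hf : ∀ i ∈ Icc m n, i * f i ≤ c) :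
    ∑ i ∈ Ico m n, (f i - f (i + 1)) * i + n * f n ≤ c * (Real.log n + 1) := by
  rw [sum_Ico_sub_succ_mul_add f hmn]
  have hfirst : m * f m ≤ c := hf m (left_mem_Icc.mpr hmn)
  have htail : ∑ i ∈ Ioc m n, f i ≤ c * Real.log n :=
    calc ∑ i ∈ Ioc m n, f i
        ≤ ∑ i ∈ Ioc m n, c * (i : ℝ)⁻¹ := sum_le_sum fun i hi => by
          have hi' : (0 : ℝ) < i := Nat.cast_pos.mpr (by have := (mem_Ioc.mp hi).1; omega)
          rw [← div_eq_mul_inv, le_div_iff₀ hi', mul_comm]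
          exact hf i (Ioc_subset_Icc_self hi)
      _ = c * ∑ i ∈ Ioc m n, (i : ℝ)⁻¹ := (mul_sum ..).symm
      _ ≤ c * Real.log n := mul_le_mul_of_nonneg_left (sum_Ioc_inv_le_log hm n) hc
  linarith

theorem monotoneOn_Icc_one_of_le_succ {β : Type*} [Preorder β] {f : ℕ → β} {n : ℕ}
    (h12 : f 1 ≤ f 2) (hsucc : ∀ k, 2 ≤ k → k < n → f k ≤ f (k + 1)) :
    MonotoneOn f (Set.Icc 1 n) :=
  monotoneOn_of_le_add_one Set.ordConnected_Icc fun k _ hk hk1 => by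
    rcases Nat.lt_or_ge k 2 with hk2 | hk2
    · obtain rfl : k = 1 := by simp only [Set.mem_Icc] at hk; omega
      exact h12
    · exact hsucc k hk2 (by simp only [Set.mem_Icc] at hk1; omega)

theorem abel_summation_bound_general (K : ℕ) (hK : 1 ≤ K) (Δ : ℕ → ℝ) (a : ℕ → ℝ)
    (hpos : 0 < Δ 1) (h12 : Δ 1 = Δ 2)
    (hmono : ∀ k, 2 ≤ k → k < K → Δ k ≤ Δ (k + 1))
    (ha : ∀ k ∈ Finset.Icc 1 K, a k = Δ 1 / Δ k) (haK : a (K + 1) = 0)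
    (j : ℕ) (hjmem : j ∈ Finset.Icc 1 K)
    (hj : ∀ k ∈ Finset.Icc 1 K, Δ j / j ≤ Δ k / k) :
    ∀ m ∈ Finset.Icc 1 K,
      (∑ i ∈ Finset.Icc m (K - 1), (1 / Δ i - 1 / Δ (i + 1)) * i)
          + (K : ℝ) / Δ K
        ≤ ((j : ℝ) / Δ j) * (Real.log K + 1) ∧
      (∑ i ∈ Finset.Icc m K, (a i - a (i + 1)) * i) / ((a m) ^ 2 * (Δ m) ^ 2)
        ≤ ((1 / Δ 1) * (Finset.Icc 1 K).sup' (Finset.nonempty_Icc.mpr hK)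
              (fun k => (k : ℝ) / Δ k)) * (Real.log K + 1) := by
  intro m hm
  obtain ⟨hm1, hmK⟩ := mem_Icc.mp hm
  have hΔ : ∀ k ∈ Icc 1 K, 0 < Δ k := fun k hk =>
    hpos.trans_le (monotoneOn_Icc_one_of_le_succ h12.le hmono (by simpa using hK)
      (by simpa using hk) (mem_Icc.mp hk).1)
  have hjmax : ∀ k ∈ Icc 1 K, (k : ℝ) * (1 / Δ k) ≤ j / Δ j := fun k hk => by
    have hΔj : 0 < Δ j / j := div_pos (hΔ j hjmem) (Nat.cast_pos.mpr (mem_Icc.mp hjmem).1)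
    simpa only [one_div_div, mul_one_div] using one_div_le_one_div_of_le hΔj (hj k hk)
  have hsum : ∑ i ∈ Ico m K, (1 / Δ i - 1 / Δ (i + 1)) * i + K * (1 / Δ K)
      ≤ j / Δ j * (Real.log K + 1) :=
    sum_Ico_sub_succ_mul_add_le hm1 hmK (div_nonneg j.cast_nonneg (hΔ j hjmem).le)
      fun i hi => hjmax i (Icc_subset_Icc_left hm1 hi)
  refine ⟨?_, ?_⟩
  · rwa [Icc_sub_one_right_eq_Ico_of_not_isMin (by simp; omega), ← mul_one_div]
  rw [sum_Icc_sub_succ_mul_eq_of_eqOn (Δ 1) hmK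
      (fun i hi => by rw [ha i (Icc_subset_Icc_left hm1 hi), mul_one_div]) haK,
    ha m hm, div_pow, div_mul_cancel₀ _ (pow_ne_zero 2 (hΔ m hm).ne'), sq,
    mul_div_mul_left _ _ hpos.ne', div_le_iff₀' hpos]
  calc _ ≤ j / Δ j * (Real.log K + 1) := hsum
    _ ≤ (Icc 1 K).sup' (nonempty_Icc.mpr hK) (fun k => (k : ℝ) / Δ k) * (Real.log K + 1) := by
        have hlog : 0 ≤ Real.log K + 1 := by positivity
        gcongr
        exact le_sup' (fun k : ℕ => (k : ℝ) / Δ k) hjmem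
    _ = _ := by field_simp

theorem abel_summation_bound (K : ℕ) (hK : 1 ≤ K) (Δ : ℕ → ℝ) (a : ℕ → ℝ)
    (hpos : 0 < Δ 1) (h12 : Δ 1 = Δ 2)
    (hmono : ∀ k, 2 ≤ k → k < K → Δ k ≤ Δ (k + 1))
    (hub : Δ K ≤ 1/8)
    (ha : ∀ k ∈ Finset.Icc 1 K, a k = Δ 1 / Δ k) (haK : a (K + 1) = 0)
    (j : ℕ) (hjmem : j ∈ Finset.Icc 1 K)
    (hj : ∀ k ∈ Finset.Icc 1 K, Δ j / j ≤ Δ k / k) :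
    ∀ m ∈ Finset.Icc 1 K,
      (∑ i ∈ Finset.Icc m (K - 1), (1 / Δ i - 1 / Δ (i + 1)) * i)
          + (K : ℝ) / Δ K
        ≤ ((j : ℝ) / Δ j) * (Real.log K + 1) ∧
      (∑ i ∈ Finset.Icc m K, (a i - a (i + 1)) * i) / ((a m) ^ 2 * (Δ m) ^ 2)
        ≤ ((1 / Δ 1) * (Finset.Icc 1 K).sup' (Finset.nonempty_Icc.mpr hK)
              (fun k => (k : ℝ) / Δ k)) * (Real.log K + 1) :=
  abel_summation_bound_general K hK Δ a hpos h12 hmono ha haK j hjmem hj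
end
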